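/- Given an optimal solution (x̂, ŷ, t̂) to the LP of the previous statement with x̂_e = min(ŷ_u, ŷ_v), the probability distribution p̂ constructed from the level sets of ŷ (p̂_{S_j} = (r_j − r_{j−1})·|S_j| for thresholds r_0 = 0 < r_1 < ... < r_ℓ the distinct positive values of ŷ and S_j = {v : ŷ_v ≥ r_j}) achieves min_{i∈[k]} [α_i ∑_S p̂_S w_i(S)/|S| + β_i] = t̂, and hence p̂ maximizes min_{i∈[k]} [α_i E_{S∼p}[w_i(S)/|S|] + β_i] over all probability distributions p on subsets of V. -/
import Mathlib


open Finset

lemma tele_aux (r : ℕ → ℝ) (n : ℕ) :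
    ∑ j ∈ Finset.Icc 1 n, (r j - r (j-1)) = r n - r 0 := by
  induction n with
  | zero => simp
  | succ n ih =>
    rw [Finset.sum_Icc_succ_top (by omega), ih]
    simp

lemma edge_sum_aux {ℓ : ℕ} {r : ℕ → ℝ} (hr0 : r 0 = 0)
    (hmono : ∀ j j', j < j' → j' ≤ ℓ → r j < r j')
    (m : ℝ)
    (hm : m = 0 ∨ ∃ j, 1 ≤ j ∧ j ≤ ℓ ∧ m = r j) :
    ∑ j ∈ Finset.Icc 1 ℓ, (if r j ≤ m then (r j - r (j-1)) else 0) = m := by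
  rcases hm with hm | ⟨j0, h1, h2, hm⟩
  · subst hm
    apply Finset.sum_eq_zero
    intro j hj
    simp only [Finset.mem_Icc] at hj
    rw [if_neg]
    push_neg
    rw [← hr0]
    exact hmono 0 j (by omega) hj.2
  · subst hm
    rw [← Finset.sum_filter]
    have hfil : (Finset.Icc 1 ℓ).filter (fun j => r j ≤ r j0) = Finset.Icc 1 j0 := by
      ext j
      simp only [Finset.mem_filter, Finset.mem_Icc]
      constructor
      · rintro ⟨⟨hj1, hjℓ⟩, hr⟩
        refine ⟨hj1, ?_⟩
        by_contra h
        push_neg at h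
        exact absurd hr (not_le.mpr (hmono j0 j h hjℓ))
      · rintro ⟨hj1, hj0⟩
        refine ⟨⟨hj1, hj0.trans h2⟩, ?_⟩
        rcases lt_or_eq_of_le hj0 with h | h
        · exact (hmono j j0 h h2).le
        · rw [h]
    rw [hfil, tele_aux, hr0, sub_zero]

theorem stmt_6 {V : Type*} [Fintype V] [DecidableEq V]
    {k : ℕ} [NeZero k]
    (E : Fin k → Finset (V × V)) (w : Fin k → V × V → ℝ)
    (hw : ∀ i, ∀ e ∈ E i, 0 < w i e)
    (α : Fin k → ℝ) (hα : ∀ i, 0 ≤ α i) (β : Fin k → ℝ)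
    -- an optimal LP solution (with x = min of endpoint values)
    (yh : V → ℝ) (th : ℝ)
    (hyh0 : ∀ v, 0 ≤ yh v) (hyh1 : ∑ v, yh v = 1)
    (hth : ∀ i, th ≤ α i * (∑ e ∈ E i, w i e * min (yh e.1) (yh e.2)) + β i)
    (hopt : ∀ (x : V × V → ℝ) (y : V → ℝ) (t : ℝ),
      (∀ i, t ≤ α i * (∑ e ∈ E i, w i e * x e) + β i) →
      (∀ i, ∀ e ∈ E i, x e ≤ y e.1 ∧ x e ≤ y e.2) →
      (∑ v, y v = 1) → (∀ e, 0 ≤ x e) → (∀ v, 0 ≤ y v) → t ≤ th)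
    -- the distinct positive values of yh
    (ℓ : ℕ) (r : ℕ → ℝ) (hr0 : r 0 = 0)
    (hmono : ∀ j j', j < j' → j' ≤ ℓ → r j < r j')
    (hvals : ∀ v, 0 < yh v → ∃ j, 1 ≤ j ∧ j ≤ ℓ ∧ yh v = r j)
    (hsurj : ∀ j, 1 ≤ j → j ≤ ℓ → ∃ v, yh v = r j) :
    -- the level-set distribution achieves value th ...
    (Finset.univ.inf' Finset.univ_nonempty (fun i =>
        α i * (∑ j ∈ Finset.Icc 1 ℓ,
            ((r j - r (j - 1)) *
                ((Finset.univ.filter (fun v => r j ≤ yh v)).card : ℝ)) *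
              ((∑ e ∈ (E i).filter (fun e =>
                    e.1 ∈ Finset.univ.filter (fun v => r j ≤ yh v) ∧
                    e.2 ∈ Finset.univ.filter (fun v => r j ≤ yh v)), w i e) /
                ((Finset.univ.filter (fun v => r j ≤ yh v)).card : ℝ))) + β i)
      = th) ∧
    -- ... and no probability distribution on subsets of V does better
    (∀ p : Finset V → ℝ, (∀ S, 0 ≤ p S) → (∑ S : Finset V, p S = 1) →
      Finset.univ.inf' Finset.univ_nonempty (fun i =>
          α i * (∑ S : Finset V,
              p S * ((∑ e ∈ (E i).filter (fun e => e.1 ∈ S ∧ e.2 ∈ S), w i e) /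
                (S.card : ℝ))) + β i) ≤ th) := by
  classical
  -- V is nonempty
  have hVne : (Finset.univ : Finset V).Nonempty := by
    by_contra h
    rw [Finset.not_nonempty_iff_eq_empty] at h
    rw [h] at hyh1
    simp at hyh1
  -- each level set is nonempty
  have hSne : ∀ j, 1 ≤ j → j ≤ ℓ →
      (Finset.univ.filter (fun v => r j ≤ yh v)).Nonempty := by
    intro j h1 h2
    obtain ⟨v, hv⟩ := hsurj j h1 h2
    exact ⟨v, by simp [hv]⟩
  -- case analysis for values of yh
  have hmcase : ∀ u : V, yh u = 0 ∨ ∃ j, 1 ≤ j ∧ j ≤ ℓ ∧ yh u = r j := by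
    intro u
    rcases eq_or_lt_of_le (hyh0 u) with h | h
    · exact Or.inl h.symm
    · exact Or.inr (hvals u h)
  -- the key rewriting for the level-set distribution
  have key : ∀ i : Fin k,
      (∑ j ∈ Finset.Icc 1 ℓ,
            ((r j - r (j - 1)) *
                ((Finset.univ.filter (fun v => r j ≤ yh v)).card : ℝ)) *
              ((∑ e ∈ (E i).filter (fun e =>
                    e.1 ∈ Finset.univ.filter (fun v => r j ≤ yh v) ∧
                    e.2 ∈ Finset.univ.filter (fun v => r j ≤ yh v)), w i e) /
                ((Finset.univ.filter (fun v => r j ≤ yh v)).card : ℝ)))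
      = ∑ e ∈ E i, w i e * min (yh e.1) (yh e.2) := by
    intro i
    have step1 : ∀ j ∈ Finset.Icc 1 ℓ,
        ((r j - r (j - 1)) *
            ((Finset.univ.filter (fun v => r j ≤ yh v)).card : ℝ)) *
          ((∑ e ∈ (E i).filter (fun e =>
                e.1 ∈ Finset.univ.filter (fun v => r j ≤ yh v) ∧
                e.2 ∈ Finset.univ.filter (fun v => r j ≤ yh v)), w i e) /
            ((Finset.univ.filter (fun v => r j ≤ yh v)).card : ℝ))
        = ∑ e ∈ E i, (if r j ≤ yh e.1 ∧ r j ≤ yh e.2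
            then (r j - r (j-1)) * w i e else 0) := by
      intro j hj
      simp only [Finset.mem_Icc] at hj
      have hc : (0:ℝ) < ((Finset.univ.filter (fun v => r j ≤ yh v)).card : ℝ) := by
        exact_mod_cast Finset.card_pos.mpr (hSne j hj.1 hj.2)
      rw [mul_assoc, mul_div_cancel₀ _ hc.ne']
      rw [Finset.sum_filter, Finset.mul_sum]
      apply Finset.sum_congr rfl
      intro e he
      simp only [Finset.mem_filter, Finset.mem_univ, true_and]
      split <;> simp
    rw [Finset.sum_congr rfl step1, Finset.sum_comm]
    apply Finset.sum_congr rfl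
    intro e he
    have : ∀ j, (if r j ≤ yh e.1 ∧ r j ≤ yh e.2 then (r j - r (j-1)) * w i e else 0)
        = (if r j ≤ min (yh e.1) (yh e.2) then (r j - r (j-1)) else 0) * w i e := by
      intro j
      simp only [le_min_iff, ite_mul, zero_mul]
    simp only [this]
    rw [← Finset.sum_mul, edge_sum_aux hr0 hmono, mul_comm]
    rcases min_choice (yh e.1) (yh e.2) with h | h <;> rw [h]
    · exact hmcase e.1
    · exact hmcase e.2
  constructor
  · -- part 1
    apply le_antisymm
    · refine hopt (fun e => min (yh e.1) (yh e.2)) yh _ ?_ ?_ hyh1 ?_ hyh0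
      · intro i
        have := Finset.inf'_le
          (fun i => α i * (∑ j ∈ Finset.Icc 1 ℓ,
            ((r j - r (j - 1)) *
                ((Finset.univ.filter (fun v => r j ≤ yh v)).card : ℝ)) *
              ((∑ e ∈ (E i).filter (fun e =>
                    e.1 ∈ Finset.univ.filter (fun v => r j ≤ yh v) ∧
                    e.2 ∈ Finset.univ.filter (fun v => r j ≤ yh v)), w i e) /
                ((Finset.univ.filter (fun v => r j ≤ yh v)).card : ℝ))) + β i)
          (Finset.mem_univ i)
        rw [key i] at this
        exact this
      · intro i e _
        exact ⟨min_le_left _ _, min_le_right _ _⟩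
      · intro e
        exact le_min (hyh0 _) (hyh0 _)
    · apply Finset.le_inf'
      intro i _
      rw [key i]
      exact hth i
  · -- part 2
    intro p hp0 hp1
    set n : ℝ := ((Finset.univ : Finset V).card : ℝ) with hn
    have hnpos : (0:ℝ) < n := by
      rw [hn]
      exact_mod_cast Finset.card_pos.mpr hVne
    set y : V → ℝ := fun v => ∑ S : Finset V,
      p S * (if v ∈ S then ((S.card : ℝ))⁻¹ else if S = ∅ then n⁻¹ else 0) with hy
    set x : V × V → ℝ := fun e => ∑ S : Finset V,
      p S * (if e.1 ∈ S ∧ e.2 ∈ S then ((S.card : ℝ))⁻¹ else 0) with hx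
    have hgnn : ∀ (S : Finset V) (v : V),
        (0:ℝ) ≤ (if v ∈ S then ((S.card : ℝ))⁻¹ else if S = ∅ then n⁻¹ else 0) := by
      intro S v
      split
      · positivity
      · split
        · positivity
        · exact le_refl 0
    have hysum : ∑ v, y v = 1 := by
      rw [hy]
      rw [Finset.sum_comm]
      rw [← hp1]
      apply Finset.sum_congr rfl
      intro S _
      rw [← Finset.mul_sum]
      by_cases hS : S = ∅
      · subst hS
        simp only [Finset.notMem_empty, if_false, ite_true, if_true,
          Finset.sum_const, nsmul_eq_mul]
        rw [← hn, mul_inv_cancel₀ hnpos.ne', mul_one]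
      · have hcard : (0:ℝ) < (S.card : ℝ) := by
          exact_mod_cast Finset.card_pos.mpr (Finset.nonempty_iff_ne_empty.mpr hS)
        have : ∀ v : V, (if v ∈ S then ((S.card : ℝ))⁻¹ else if S = ∅ then n⁻¹ else 0)
            = (if v ∈ S then ((S.card : ℝ))⁻¹ else 0) := by
          intro v
          simp [hS]
        simp only [this]
        rw [Finset.sum_ite_mem, Finset.univ_inter, Finset.sum_const, nsmul_eq_mul,
          mul_inv_cancel₀ hcard.ne', mul_one]
    have hxy : ∀ i, ∀ e ∈ E i, x e ≤ y e.1 ∧ x e ≤ y e.2 := by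
      intro i e _
      constructor <;>
      · apply Finset.sum_le_sum
        intro S _
        apply mul_le_mul_of_nonneg_left _ (hp0 S)
        split
        · rename_i hb
          rw [if_pos (by tauto)]
        · exact hgnn S _
    have hxnn : ∀ e, 0 ≤ x e := by
      intro e
      apply Finset.sum_nonneg
      intro S _
      apply mul_nonneg (hp0 S)
      split <;> positivity
    have hynn : ∀ v, 0 ≤ y v := by
      intro v
      apply Finset.sum_nonneg
      intro S _
      exact mul_nonneg (hp0 S) (hgnn S v)
    have hobj : ∀ i, ∑ e ∈ E i, w i e * x e
        = ∑ S : Finset V, p S * ((∑ e ∈ (E i).filter (fun e => e.1 ∈ S ∧ e.2 ∈ S), w i e) /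
            (S.card : ℝ)) := by
      intro i
      simp only [hx]
      simp only [Finset.mul_sum]
      rw [Finset.sum_comm]
      apply Finset.sum_congr rfl
      intro S _
      rw [div_eq_mul_inv, Finset.sum_filter, Finset.sum_mul, Finset.mul_sum]
      apply Finset.sum_congr rfl
      intro e _
      split <;> ring
    refine hopt x y _ ?_ hxy hysum hxnn hynn
    intro i
    have := Finset.inf'_le
      (fun i => α i * (∑ S : Finset V,
          p S * ((∑ e ∈ (E i).filter (fun e => e.1 ∈ S ∧ e.2 ∈ S), w i e) /
            (S.card : ℝ))) + β i)
      (Finset.mem_univ i)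
    rw [← hobj i] at this
    exact this
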